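/- arXiv:2209.08908 — 6 statements merged into one kernel-verified Lean document; each statement's English description precedes it below -/
import Mathlib

section
/- Exponentially weighted recursive least squares with persistent excitation converges (core of the paper's Lemma 1, parameter part): Let m ≥ 1, let (φ_t)_{t≥0} be a sequence in ℝ^m with ‖φ_t‖ ≤ M for all t and some M > 0, and suppose φ is persistently exciting: there exist T ≥ 1 and α > 0 such that for every t, ∑_{k=t}^{t+T−1} φ_k φ_kᵀ ⪰ α I_m (i.e., vᵀ(∑_{k=t}^{t+T−1} φ_k φ_kᵀ)v ≥ α‖v‖² for all v ∈ ℝ^m). Fix ζ ∈ (0,1), a symmetric positive definite Γ_0 ∈ ℝ^{m×m}, a true parameter p ∈ ℝ^m and any p̂_0 ∈ ℝ^m, and define recursively Γ_t = ζ^{−2}[Γ_{t−1} − Γ_{t−1}φ_{t−1}φ_{t−1}ᵀΓ_{t−1}/(ζ² + φ_{t−1}ᵀΓ_{t−1}φ_{t−1})] and p̂_t = p̂_{t−1} + Γ_t φ_{t−1}(φ_{t−1}ᵀ p − φ_{t−1}ᵀ p̂_{t−1}) for t ≥ 1. Then there exists C > 0 such that ‖p − p̂_t‖ ≤ C ζ^{2t}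 for all t; in particular p̂_t → p as t → ∞. -/
/-!
The information matrices `Γ t⁻¹` obey `Γ (t+1)⁻¹ = ζ² Γ t⁻¹ + φ t φ tᵀ` (Sherman–Morrison), and
since `Γ (t+1)⁻¹ Γ (t+1) φ t = φ t`, the rank-one term cancels the correction of the estimate:
`Γ t⁻¹ (p̂ t - p) = ζ^{2t} Γ 0⁻¹ (p̂ 0 - p)`. Unrolling the recursion over one excitation window
gives `Γ t⁻¹ ⪰ ζ^{2T} α I` for `t ≥ T`, hence
`ζ^{2T} α ‖p̂ t - p‖² ≤ ζ^{2t} ‖p̂ t - p‖ ‖Γ 0⁻¹ (p̂ 0 - p)‖`.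
The finitely many `t < T` only enlarge the constant.
-/

open Matrix Filter

noncomputable def mulVecE {m : ℕ} (G : Matrix (Fin m) (Fin m) ℝ)
    (v : EuclideanSpace ℝ (Fin m)) : EuclideanSpace ℝ (Fin m) := WithLp.toLp 2 (G *ᵥ v)

open scoped InnerProductSpace

theorem pow_mul_sum_Ico_le_of_eq_mul_add {ρ : ℝ} {q a : ℕ → ℝ} (hρ0 : 0 ≤ ρ) (hρ1 : ρ ≤ 1)
    (hq : ∀ t, q (t + 1) = ρ * q t + a t) (ha : ∀ t, 0 ≤ a t) {t : ℕ} (hqt : 0 ≤ q t) (k : ℕ) :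
    ρ ^ k * ∑ i ∈ Finset.Ico t (t + k), a i ≤ q (t + k) := by
  induction k with
  | zero => simpa
  | succ k ih =>
    rw [← add_assoc, Finset.sum_Ico_succ_top (by omega), hq]
    calc ρ ^ (k + 1) * (∑ i ∈ Finset.Ico t (t + k), a i + a (t + k))
        = ρ * (ρ ^ k * ∑ i ∈ Finset.Ico t (t + k), a i) + ρ ^ (k + 1) * a (t + k) := by ring
      _ ≤ ρ * q (t + k) + a (t + k) :=
        add_le_add (mul_le_mul_of_nonneg_left ih hρ0)
          (mul_le_of_le_one_left (ha _) (pow_le_one₀ hρ0 hρ1))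

theorem norm_le_div_of_mul_norm_sq_le_inner {E : Type*} [NormedAddCommGroup E]
    [InnerProductSpace ℝ E] {x y : E} {β : ℝ} (hβ : 0 < β) (h : β * ‖x‖ ^ 2 ≤ ⟪x, y⟫_ℝ) :
    ‖x‖ ≤ ‖y‖ / β := by
  rw [le_div_iff₀ hβ]
  have hxy := h.trans (real_inner_le_norm x y)
  rcases (norm_nonneg x).eq_or_lt with hx | hx
  · rw [← hx, zero_mul]; positivity
  · nlinarith

theorem exists_norm_sub_le_and_tendsto_of_isBigO_pow {E : Type*} [NormedAddCommGroup E]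
    {f : ℕ → E} {a : E} {r : ℝ} (hr0 : 0 < r) (hr1 : r < 1)
    (h : (fun t => f t - a) =O[atTop] (r ^ ·)) :
    (∃ C > 0, ∀ t, ‖a - f t‖ ≤ C * r ^ t) ∧ Tendsto f atTop (nhds a) := by
  obtain ⟨C, hC, hCf⟩ := Asymptotics.bound_of_isBigO_nat_atTop h
  refine ⟨⟨C, hC, fun t => ?_⟩, tendsto_sub_nhds_zero_iff.1
    (h.trans_tendsto (tendsto_pow_atTop_nhds_zero_of_lt_one hr0.le hr1))⟩
  simpa [norm_sub_rev, abs_of_pos hr0] using hCf (pow_pos hr0 t).ne'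

namespace Matrix

variable {n : Type*} [Fintype n]

section CommRing

variable {R : Type*} [CommRing R]

theorem vecMulVec_mul_mul_vecMulVec (G : Matrix n n R) (u : n → R) :
    vecMulVec u u * G * vecMulVec u u = (u ⬝ᵥ (G *ᵥ u)) • vecMulVec u u := by
  rw [vecMulVec_mul, vecMulVec_mul_vecMulVec, ← dotProduct_mulVec, vecMulVec_smul]

theorem vecMulVec_self_mulVec (u v : n → R) : vecMulVec u u *ᵥ v = (u ⬝ᵥ v) • u := by
  rw [vecMulVec_mulVec, op_smul_eq_smul]

theorem dotProduct_vecMulVec_self_mulVec (u v : n → R) :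
    v ⬝ᵥ (vecMulVec u u *ᵥ v) = (u ⬝ᵥ v) ^ 2 := by
  rw [vecMulVec_self_mulVec, dotProduct_smul, smul_eq_mul, dotProduct_comm v u, sq]

theorem dotProduct_sum_vecMulVec_self_mulVec {ι : Type*} (s : Finset ι) (u : ι → n → R)
    (v : n → R) :
    v ⬝ᵥ ((∑ k ∈ s, vecMulVec (u k) (u k)) *ᵥ v) = ∑ k ∈ s, (u k ⬝ᵥ v) ^ 2 := by
  simp only [sum_mulVec, dotProduct_sum, dotProduct_vecMulVec_self_mulVec]

end CommRing

/-- The Sherman–Morrison formula. -/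
theorem inv_smul_inv_add_vecMulVec [DecidableEq n] {K : Type*} [Field K] {G : Matrix n n K}
    (hG : IsUnit G.det) {ρ : K} (hρ : ρ ≠ 0) (u : n → K) (hu : ρ + u ⬝ᵥ (G *ᵥ u) ≠ 0) :
    (ρ • G⁻¹ + vecMulVec u u)⁻¹ =
      ρ⁻¹ • (G - (ρ + u ⬝ᵥ (G *ᵥ u))⁻¹ • (G * vecMulVec u u * G)) := by
  refine inv_eq_left_inv ?_
  set s := u ⬝ᵥ (G *ᵥ u)
  set U := vecMulVec u u
  have hGG : G * G⁻¹ = 1 := mul_nonsing_inv G hG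
  calc ρ⁻¹ • (G - (ρ + s)⁻¹ • (G * U * G)) * (ρ • G⁻¹ + U)
      = ρ⁻¹ • (ρ • (G * G⁻¹) + G * U -
          (ρ + s)⁻¹ • (ρ • (G * U * (G * G⁻¹)) + G * (U * G * U))) := by
        simp only [Matrix.sub_mul, Matrix.mul_add, Matrix.smul_mul, Matrix.mul_smul,
          Matrix.mul_assoc]
        module
    _ = 1 := by
        rw [hGG, vecMulVec_mul_mul_vecMulVec, Matrix.mul_one, Matrix.mul_smul, ← add_smul,
          smul_smul, inv_mul_cancel₀ hu, one_smul, add_sub_cancel_right, smul_smul,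
          inv_mul_cancel₀ hρ, one_smul]

theorem PosDef.smul_inv_add_vecMulVec [DecidableEq n] {G : Matrix n n ℝ} (hG : G.PosDef)
    {ρ : ℝ} (hρ : 0 < ρ) (u : n → ℝ) : (ρ • G⁻¹ + vecMulVec u u).PosDef := by
  simpa using (hG.inv.smul hρ).add_posSemidef (posSemidef_vecMulVec_self_star u)

theorem pow_mul_dotProduct_sum_vecMulVec_mulVec_le {ρ : ℝ} (hρ0 : 0 ≤ ρ) (hρ1 : ρ ≤ 1)
    {φ : ℕ → n → ℝ} {P : ℕ → Matrix n n ℝ}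
    (hP : ∀ t, P (t + 1) = ρ • P t + vecMulVec (φ t) (φ t))
    {t : ℕ} (hPt : (P t).PosSemidef) (k : ℕ) (v : n → ℝ) :
    ρ ^ k * (v ⬝ᵥ ((∑ i ∈ Finset.Ico t (t + k), vecMulVec (φ i) (φ i)) *ᵥ v)) ≤
      v ⬝ᵥ (P (t + k) *ᵥ v) := by
  rw [dotProduct_sum_vecMulVec_self_mulVec]
  refine pow_mul_sum_Ico_le_of_eq_mul_add (q := fun s => v ⬝ᵥ (P s *ᵥ v)) hρ0 hρ1
    (fun s => ?_) (fun s => sq_nonneg _) (by simpa using hPt.dotProduct_mulVec_nonneg v) k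
  rw [hP, add_mulVec, smul_mulVec, dotProduct_add, dotProduct_smul, smul_eq_mul,
    dotProduct_vecMulVec_self_mulVec]

end Matrix

namespace EuclideanSpace

variable {n : Type*} [Fintype n]

theorem dotProduct_eq_inner (x y : EuclideanSpace ℝ n) : x ⬝ᵥ y = ⟪x, y⟫_ℝ := by
  rw [inner_eq_star_dotProduct, star_trivial, dotProduct_comm]

theorem norm_le_div_of_mulVec_eq {P : Matrix n n ℝ} {β : ℝ} (hβ : 0 < β)
    (hP : ∀ v : EuclideanSpace ℝ n, β * ‖v‖ ^ 2 ≤ v ⬝ᵥ (P *ᵥ v))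
    {x y : EuclideanSpace ℝ n} (hxy : P *ᵥ x = y) : ‖x‖ ≤ ‖y‖ / β :=
  norm_le_div_of_mul_norm_sq_le_inner hβ <| by simpa only [hxy, dotProduct_eq_inner] using hP x

end EuclideanSpace

namespace RLS

variable {n : Type*} [Fintype n] [DecidableEq n]

noncomputable def gainStep (ρ : ℝ) (u : n → ℝ) (G : Matrix n n ℝ) : Matrix n n ℝ :=
  ρ⁻¹ • (G - (ρ + u ⬝ᵥ (G *ᵥ u))⁻¹ • (G * vecMulVec u u * G))

variable {ρ : ℝ}

theorem gainStep_eq_inv {G : Matrix n n ℝ} (hG : G.PosDef) (hρ : 0 < ρ) (u : n → ℝ) :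
    gainStep ρ u G = (ρ • G⁻¹ + vecMulVec u u)⁻¹ := by
  have hu : 0 ≤ u ⬝ᵥ (G *ᵥ u) := by simpa using hG.posSemidef.dotProduct_mulVec_nonneg u
  exact (inv_smul_inv_add_vecMulVec ((isUnit_iff_isUnit_det G).mp hG.isUnit) hρ.ne' u
    (by positivity)).symm

theorem posDef_gainStep {G : Matrix n n ℝ} (hG : G.PosDef) (hρ : 0 < ρ) (u : n → ℝ) :
    (gainStep ρ u G).PosDef := by
  rw [gainStep_eq_inv hG hρ]
  exact (hG.smul_inv_add_vecMulVec hρ u).inv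

theorem inv_gainStep {G : Matrix n n ℝ} (hG : G.PosDef) (hρ : 0 < ρ) (u : n → ℝ) :
    (gainStep ρ u G)⁻¹ = ρ • G⁻¹ + vecMulVec u u := by
  rw [gainStep_eq_inv hG hρ, nonsing_inv_nonsing_inv]
  exact (hG.smul_inv_add_vecMulVec hρ u).det_pos.ne'.isUnit

theorem posDef_of_gainStep {φ : ℕ → n → ℝ} {Γ : ℕ → Matrix n n ℝ} (hρ : 0 < ρ)
    (hΓ0 : (Γ 0).PosDef) (hΓ : ∀ t, Γ (t + 1) = gainStep ρ (φ t) (Γ t)) (t : ℕ) :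
    (Γ t).PosDef := by
  induction t with
  | zero => exact hΓ0
  | succ t ih => exact hΓ t ▸ posDef_gainStep ih hρ (φ t)

theorem inv_mulVec_error_eq {K : Type*} [Field K] {ρ : K} {φ : ℕ → n → K}
    {Γ : ℕ → Matrix n n K} (hΓ : ∀ t, IsUnit (Γ t).det)
    (hinv : ∀ t, (Γ (t + 1))⁻¹ = ρ • (Γ t)⁻¹ + vecMulVec (φ t) (φ t)) {e : ℕ → n → K}
    (he : ∀ t, e (t + 1) = e t - (φ t ⬝ᵥ e t) • (Γ (t + 1) *ᵥ φ t)) (t : ℕ) :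
    (Γ t)⁻¹ *ᵥ e t = ρ ^ t • ((Γ 0)⁻¹ *ᵥ e 0) := by
  induction t with
  | zero => rw [pow_zero, one_smul]
  | succ t ih =>
    rw [he, mulVec_sub, mulVec_smul, mulVec_mulVec, nonsing_inv_mul _ (hΓ _), one_mulVec,
      hinv, add_mulVec, smul_mulVec, vecMulVec_self_mulVec, add_sub_cancel_right, ih,
      smul_smul, pow_succ']

end RLS

theorem rls_persistent_excitation_converges_general
    (m : ℕ)
    (φ : ℕ → EuclideanSpace ℝ (Fin m))
    (T : ℕ) (α : ℝ) (hα : 0 < α)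
    (hPE : ∀ t : ℕ, ∀ v : EuclideanSpace ℝ (Fin m),
      α * ‖v‖ ^ 2 ≤ v ⬝ᵥ ((∑ k ∈ Finset.Ico t (t + T), vecMulVec (φ k) (φ k)) *ᵥ v))
    (ζ : ℝ) (hζ : ζ ∈ Set.Ioo (0 : ℝ) 1)
    (Γ : ℕ → Matrix (Fin m) (Fin m) ℝ) (hΓ0 : (Γ 0).PosDef)
    (hΓ : ∀ t : ℕ, Γ (t + 1) =
      (ζ ^ 2)⁻¹ • (Γ t - (ζ ^ 2 + φ t ⬝ᵥ (Γ t *ᵥ φ t))⁻¹ •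
        (Γ t * vecMulVec (φ t) (φ t) * Γ t)))
    (p : EuclideanSpace ℝ (Fin m)) (phat : ℕ → EuclideanSpace ℝ (Fin m))
    (hphat : ∀ t : ℕ, phat (t + 1) =
      phat t + (φ t ⬝ᵥ p - φ t ⬝ᵥ phat t) • mulVecE (Γ (t + 1)) (φ t)) :
    (∃ C > (0 : ℝ), ∀ t : ℕ, ‖p - phat t‖ ≤ C * ζ ^ (2 * t)) ∧
      Tendsto phat atTop (nhds p) := by
  obtain ⟨hζ0, hζ1⟩ := hζ
  have hρ0 : 0 < ζ ^ 2 := by positivity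
  have hρ1 : ζ ^ 2 < 1 := pow_lt_one₀ hζ0.le hζ1 two_ne_zero
  have hpd : ∀ t, (Γ t).PosDef := RLS.posDef_of_gainStep hρ0 hΓ0 hΓ
  have hinv : ∀ t, (Γ (t + 1))⁻¹ = ζ ^ 2 • (Γ t)⁻¹ + vecMulVec (φ t) (φ t) := fun t => by
    rw [hΓ]; exact RLS.inv_gainStep (hpd t) hρ0 _
  set e : ℕ → EuclideanSpace ℝ (Fin m) := fun t => phat t - p
  have he : ∀ t, (Γ t)⁻¹ *ᵥ e t = (ζ ^ 2) ^ t • ((Γ 0)⁻¹ *ᵥ e 0) :=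
    RLS.inv_mulVec_error_eq (fun t => (hpd t).det_pos.ne'.isUnit) hinv fun t => by
      simp only [e, hphat, mulVecE, WithLp.ofLp_sub, WithLp.ofLp_add, WithLp.ofLp_smul,
        dotProduct_sub]
      module
  set β := (ζ ^ 2) ^ T * α
  have hcoer : ∀ s (v : EuclideanSpace ℝ (Fin m)), β * ‖v‖ ^ 2 ≤ v ⬝ᵥ ((Γ (s + T))⁻¹ *ᵥ v) := by
    intro s v
    rw [mul_assoc]
    exact (mul_le_mul_of_nonneg_left (hPE s v) (by positivity)).trans <|
      pow_mul_dotProduct_sum_vecMulVec_mulVec_le (P := fun t => (Γ t)⁻¹) hρ0.le hρ1.le hinv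
        (hpd s).inv.posSemidef T v
  have hO : e =O[atTop] ((ζ ^ 2) ^ ·) := by
    refine Asymptotics.IsBigO.of_bound (‖WithLp.toLp 2 ((Γ 0)⁻¹ *ᵥ e 0)‖ / β)
      (eventually_atTop.2 ⟨T, fun t ht => ?_⟩)
    obtain ⟨s, rfl⟩ := Nat.exists_eq_add_of_le' ht
    have := EuclideanSpace.norm_le_div_of_mulVec_eq (by positivity) (hcoer s) (he (s + T))
    rw [WithLp.toLp_smul, norm_smul] at this
    exact this.trans_eq (by ring)
  simpa only [pow_mul] using exists_norm_sub_le_and_tendsto_of_isBigO_pow hρ0 hρ1 hO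

/-- Exponentially weighted recursive least squares with persistent excitation
converges geometrically (parameter part of the paper's Lemma 1). -/
theorem rls_persistent_excitation_converges
    (m : ℕ) (hm : 1 ≤ m)
    (φ : ℕ → EuclideanSpace ℝ (Fin m))
    (M : ℝ) (hM : 0 < M) (hφbd : ∀ t, ‖φ t‖ ≤ M)
    (T : ℕ) (hT : 1 ≤ T) (α : ℝ) (hα : 0 < α)
    (hPE : ∀ t : ℕ, ∀ v : EuclideanSpace ℝ (Fin m),
      α * ‖v‖ ^ 2 ≤ v ⬝ᵥ ((∑ k ∈ Finset.Ico t (t + T), vecMulVec (φ k) (φ k)) *ᵥ v))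
    (ζ : ℝ) (hζ : ζ ∈ Set.Ioo (0 : ℝ) 1)
    (Γ : ℕ → Matrix (Fin m) (Fin m) ℝ) (hΓ0 : (Γ 0).PosDef)
    (hΓ : ∀ t : ℕ, Γ (t + 1) =
      (ζ ^ 2)⁻¹ • (Γ t - (ζ ^ 2 + φ t ⬝ᵥ (Γ t *ᵥ φ t))⁻¹ •
        (Γ t * vecMulVec (φ t) (φ t) * Γ t)))
    (p : EuclideanSpace ℝ (Fin m)) (phat : ℕ → EuclideanSpace ℝ (Fin m))
    (hphat : ∀ t : ℕ, phat (t + 1) =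
      phat t + (φ t ⬝ᵥ p - φ t ⬝ᵥ phat t) • mulVecE (Γ (t + 1)) (φ t)) :
    (∃ C > (0 : ℝ), ∀ t : ℕ, ‖p - phat t‖ ≤ C * ζ ^ (2 * t)) ∧
      Tendsto phat atTop (nhds p) :=
  rls_persistent_excitation_converges_general m φ T α hα hPE ζ hζ Γ hΓ0 hΓ p phat hphat
end

section
/- Bound on the prediction uncertainty (equation (20) of the paper): Let F ∈ ℝ^{n×n}, W ⊆ ℝ^n, X̂ ⊆ ℝ^n, U ⊆ ℝ, Ψ_A ⊆ ℝ^{n×n}, and Ψ̃ ⊆ ℝ^{n×(n+1)}. Define Ω₃ := { ψ̄ ẑ : ψ̄ ∈ Ψ̃, ẑ = (x̂ᵀ, u)ᵀ with x̂ ∈ X̂, u ∈ U } ⊆ ℝ^n, assume Ω₃ is nonempty and convex, and define Ω₂ := { (Â − F) x̃ : Â ∈ Ψ_A, x̃ ∈ W } + Ω₃ (Minkowski sum). Let i ≥ 0, let x̃ ∈ W, Â ∈ Ψ_A, let ψ̂_0, ψ̂_1, …, ψ̂_{i+1} ∈ ℝ^{n×(n+1)} satisfy ψ̂_{k+1} −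 ψ̂_k ∈ Ψ̃ for every k = 0, …, i, and let ẑ = (x̂ᵀ, u)ᵀ with x̂ ∈ X̂ and u ∈ U. Then (Â − F) x̃ + (ψ̂_{i+1} − ψ̂_0) ẑ ∈ Ω₂ + i•Ω₃. -/
open Matrix Pointwise

/-!
Telescoping writes `ψ̂_{i+1} - ψ̂_0` as the sum of the `i + 1` increments `ψ̂_{k+1} - ψ̂_k`, each of
which maps `ẑ` into `Ω₃`. The first increment is absorbed into `Ω₂`; the other `i` points of `Ω₃`
sum to `i` times their barycentre, which lies in `Ω₃` by convexity.
-/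

theorem Convex.sum_mem_card_smul {𝕜 E ι : Type*} [Field 𝕜] [LinearOrder 𝕜] [IsStrictOrderedRing 𝕜]
    [AddCommGroup E] [Module 𝕜 E] {s : Set E} (hs : Convex 𝕜 s) (hne : s.Nonempty)
    {t : Finset ι} {v : ι → E} (hv : ∀ i ∈ t, v i ∈ s) :
    ∑ i ∈ t, v i ∈ (t.card : 𝕜) • s := by
  rcases t.eq_empty_or_nonempty with rfl | ht
  · simp [Set.zero_smul_set hne]
  have hcard : (t.card : 𝕜) ≠ 0 := Nat.cast_ne_zero.2 ht.card_pos.ne'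
  have hmean : ∑ i ∈ t, (t.card : 𝕜)⁻¹ • v i ∈ s :=
    hs.sum_mem (fun _ _ => by positivity) (by simp [hcard]) hv
  exact ⟨_, hmean, by simp only [← Finset.smul_sum, smul_inv_smul₀ hcard]⟩

theorem Matrix.sub_mulVec_eq_add_sum_range_sub {m n α : Type*} [Fintype n] [Ring α]
    (f : ℕ → Matrix m n α) (x : n → α) (i : ℕ) :
    (f (i + 1) - f 0) *ᵥ x =
      (f 1 - f 0) *ᵥ x + ∑ k ∈ Finset.range i, (f (k + 2) - f (k + 1)) *ᵥ x := by
  calc (f (i + 1) - f 0) *ᵥ x = ∑ k ∈ Finset.range (i + 1), (f (k + 1) - f k) *ᵥ x := by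
        rw [← sum_mulVec, Finset.sum_range_sub]
    _ = _ := by rw [Finset.sum_range_succ', add_comm]

/-- Bound on the prediction uncertainty (equation (20) of the paper). -/
theorem prediction_uncertainty_bound
    (n : ℕ) (F : Matrix (Fin n) (Fin n) ℝ)
    (W Xhat : Set (Fin n → ℝ)) (U : Set ℝ)
    (ΨA : Set (Matrix (Fin n) (Fin n) ℝ))
    (Ψtilde : Set (Matrix (Fin n) (Fin (n + 1)) ℝ))
    (Ω₂ Ω₃ : Set (Fin n → ℝ))
    (hΩ₃ : Ω₃ = {v | ∃ ψ ∈ Ψtilde, ∃ xhat ∈ Xhat, ∃ u ∈ U, v = ψ *ᵥ Fin.snoc xhat u})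
    (hΩ₃ne : Ω₃.Nonempty) (hΩ₃conv : Convex ℝ Ω₃)
    (hΩ₂ : Ω₂ = {v | ∃ Ahat ∈ ΨA, ∃ xt ∈ W, v = (Ahat - F) *ᵥ xt} + Ω₃)
    (i : ℕ)
    (xtilde : Fin n → ℝ) (hxtilde : xtilde ∈ W)
    (Ahat : Matrix (Fin n) (Fin n) ℝ) (hAhat : Ahat ∈ ΨA)
    (ψhat : ℕ → Matrix (Fin n) (Fin (n + 1)) ℝ)
    (hdrift : ∀ k : ℕ, k ≤ i → ψhat (k + 1) - ψhat k ∈ Ψtilde)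
    (xhat : Fin n → ℝ) (hxhat : xhat ∈ Xhat) (u : ℝ) (hu : u ∈ U) :
    (Ahat - F) *ᵥ xtilde + (ψhat (i + 1) - ψhat 0) *ᵥ Fin.snoc xhat u ∈
      Ω₂ + (i : ℝ) • Ω₃ := by
  have hstep : ∀ k ≤ i, (ψhat (k + 1) - ψhat k) *ᵥ Fin.snoc xhat u ∈ Ω₃ := fun k hk =>
    hΩ₃ ▸ ⟨_, hdrift k hk, xhat, hxhat, u, hu, rfl⟩
  have hfirst : (Ahat - F) *ᵥ xtilde + (ψhat 1 - ψhat 0) *ᵥ Fin.snoc xhat u ∈ Ω₂ :=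
    hΩ₂ ▸ Set.add_mem_add ⟨Ahat, hAhat, xtilde, hxtilde, rfl⟩ (hstep 0 i.zero_le)
  have hrest : ∑ k ∈ Finset.range i, (ψhat (k + 2) - ψhat (k + 1)) *ᵥ Fin.snoc xhat u ∈
      (i : ℝ) • Ω₃ := by
    simpa only [Finset.card_range] using hΩ₃conv.sum_mem_card_smul hΩ₃ne fun k hk => hstep (k + 1) (Finset.mem_range.1 hk)
  rw [sub_mulVec_eq_add_sum_range_sub, ← add_assoc]
  exact Set.add_mem_add hfirst hrest
end

section
/- Lemma 2 of the paper (constraint satisfaction under feasibility, hypothesis-explicit form): Let n, N ≥ 1, F, A ∈ ℝ^{n×n}, b ∈ ℝ^n, let X ⊆ ℝ^n, U ⊆ ℝ, and W, Ω₁ ⊆ ℝ^n with F·W + Ω₁ ⊆ W. Let (Â_i)_{i≥1} in ℝ^{n×n} and (b̂_i)_{i≥1} in ℝ^n be parameter estimates such that for every i ≥ 0 and every x ∈ X, u ∈ U: (A − Â_{i+1})x + (b − b̂_{i+1})u ∈ Ω₁. Let (u_i)_{i≥0} be inputs, let (x_i) satisfy the plant dynamics x_{i+1} = A x_i + b u_i,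 let (x̂_i) satisfy the observer dynamics x̂_{i+1} = F x̂_i + (Â_{i+1} − F) x_i + b̂_{i+1} u_i, and set x̃_i := x_i − x̂_i. Assume x_0 ∈ X, x̃_0 ∈ W, and for every i = 1, …, N: u_{i−1} ∈ U and x̂_i ∈ X ⊖ W. Then for every i = 1, …, N: x̃_i ∈ W and x_i ∈ X. -/
/-!
The estimation error obeys `x̃ᵢ₊₁ = F x̃ᵢ + ωᵢ`, where `ωᵢ = (A - Âᵢ₊₁) xᵢ + uᵢ (b - b̂ᵢ₊₁)` lies in `Ω₁`
as long as `xᵢ ∈ X` and `uᵢ ∈ U`; so the invariance of `W` keeps `x̃ᵢ₊₁ ∈ W`, and then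
`xᵢ₊₁ = x̂ᵢ₊₁ + x̃ᵢ₊₁ ∈ X` because `x̂ᵢ₊₁ ∈ X ⊖ W`. Induction on `i` propagates both memberships.
-/

open Matrix Pointwise

/-- Pontryagin difference of two subsets of ℝⁿ. -/
def pontryaginDiff {n : ℕ} (A B : Set (Fin n → ℝ)) : Set (Fin n → ℝ) :=
  {x | ∀ b ∈ B, x + b ∈ A}

theorem sub_observer_step_eq {m R : Type*} [Fintype m] [CommRing R]
    (F A Ahat : Matrix m m R) (b bhat x xhat : m → R) (u : R) :
    (A *ᵥ x + u • b) - (F *ᵥ xhat + (Ahat - F) *ᵥ x + u • bhat) =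
      F *ᵥ (x - xhat) + ((A - Ahat) *ᵥ x + u • (b - bhat)) := by
  simp only [sub_mulVec, mulVec_sub, smul_sub]
  abel

theorem mem_of_sub_mem_of_mem_pontryaginDiff {n : ℕ} {X W : Set (Fin n → ℝ)}
    {x xhat : Fin n → ℝ} (hxhat : xhat ∈ pontryaginDiff X W) (herr : x - xhat ∈ W) :
    x ∈ X := by
  simpa using hxhat _ herr

theorem constraint_satisfaction_under_feasibility_general
    (n N : ℕ)
    (F A : Matrix (Fin n) (Fin n) ℝ) (b : Fin n → ℝ)
    (X : Set (Fin n → ℝ)) (U : Set ℝ)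
    (W Ω₁ : Set (Fin n → ℝ))
    (hW : (fun v => F *ᵥ v) '' W + Ω₁ ⊆ W)
    (Ahat : ℕ → Matrix (Fin n) (Fin n) ℝ) (bhat : ℕ → (Fin n → ℝ))
    (hest : ∀ i : ℕ, ∀ x ∈ X, ∀ u ∈ U,
      (A - Ahat (i + 1)) *ᵥ x + u • (b - bhat (i + 1)) ∈ Ω₁)
    (u : ℕ → ℝ) (x xhat : ℕ → (Fin n → ℝ))
    (hplant : ∀ i : ℕ, x (i + 1) = A *ᵥ x i + u i • b)
    (hobs : ∀ i : ℕ, xhat (i + 1) =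
      F *ᵥ xhat i + (Ahat (i + 1) - F) *ᵥ x i + u i • bhat (i + 1))
    (hx0 : x 0 ∈ X) (hxt0 : x 0 - xhat 0 ∈ W)
    (hfeas : ∀ i : ℕ, 1 ≤ i → i ≤ N →
      u (i - 1) ∈ U ∧ xhat i ∈ pontryaginDiff X W) :
    ∀ i : ℕ, 1 ≤ i → i ≤ N → x i - xhat i ∈ W ∧ x i ∈ X := by
  suffices key : ∀ i ≤ N, x i - xhat i ∈ W ∧ x i ∈ X from fun i _ hi => key i hi
  intro i
  induction i with
  | zero => exact fun _ => ⟨hxt0, hx0⟩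
  | succ i ih =>
    intro hi
    obtain ⟨herr, hxi⟩ := ih (by omega)
    obtain ⟨hu, hxhat⟩ := hfeas (i + 1) (by omega) hi
    rw [Nat.add_sub_cancel] at hu
    have herr' : x (i + 1) - xhat (i + 1) ∈ W := by
      rw [hplant, hobs, sub_observer_step_eq]
      exact hW (Set.add_mem_add (Set.mem_image_of_mem _ herr) (hest i _ hxi _ hu))
    exact ⟨herr', mem_of_sub_mem_of_mem_pontryaginDiff hxhat herr'⟩

/-- Lemma 2 of the paper: constraint satisfaction under feasibility
(hypothesis-explicit form). -/
theorem constraint_satisfaction_under_feasibility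
    (n N : ℕ) (hn : 1 ≤ n) (hN : 1 ≤ N)
    (F A : Matrix (Fin n) (Fin n) ℝ) (b : Fin n → ℝ)
    (X : Set (Fin n → ℝ)) (U : Set ℝ)
    (W Ω₁ : Set (Fin n → ℝ))
    (hW : (fun v => F *ᵥ v) '' W + Ω₁ ⊆ W)
    (Ahat : ℕ → Matrix (Fin n) (Fin n) ℝ) (bhat : ℕ → (Fin n → ℝ))
    (hest : ∀ i : ℕ, ∀ x ∈ X, ∀ u ∈ U,
      (A - Ahat (i + 1)) *ᵥ x + u • (b - bhat (i + 1)) ∈ Ω₁)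
    (u : ℕ → ℝ) (x xhat : ℕ → (Fin n → ℝ))
    (hplant : ∀ i : ℕ, x (i + 1) = A *ᵥ x i + u i • b)
    (hobs : ∀ i : ℕ, xhat (i + 1) =
      F *ᵥ xhat i + (Ahat (i + 1) - F) *ᵥ x i + u i • bhat (i + 1))
    (hx0 : x 0 ∈ X) (hxt0 : x 0 - xhat 0 ∈ W)
    (hfeas : ∀ i : ℕ, 1 ≤ i → i ≤ N →
      u (i - 1) ∈ U ∧ xhat i ∈ pontryaginDiff X W) :
    ∀ i : ℕ, 1 ≤ i → i ≤ N → x i - xhat i ∈ W ∧ x i ∈ X :=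
  constraint_satisfaction_under_feasibility_general n N F A b X U W Ω₁ hW Ahat bhat hest u x xhat
    hplant hobs hx0 hxt0 hfeas
end

section
/- Parameter-update shift of the tube constraint (middle-step inclusion in the proof of Theorem 1): Let S, Ω₂, Ω₃ ⊆ ℝ^n with Ω₃ nonempty and convex, let i ≥ 0, let Â, Â' ∈ ℝ^{n×n} and b̂, b̂' ∈ ℝ^n, let s ∈ ℝ^n and u ∈ ℝ. If Â s + b̂ u ∈ S ⊖ (Ω₂ + (i+1)•Ω₃) and (Â' − Â)s + (b̂' − b̂)u ∈ Ω₃, then Â' s + b̂' u ∈ S ⊖ (Ω₂ + i•Ω₃). -/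
/-! The new point is the old one shifted by `d := (Â' - Â) s + u (b̂' - b̂) ∈ Ω₃`. For convex `Ω₃`
one has `(1 + i) • Ω₃ = Ω₃ + i • Ω₃`, so `d + i • Ω₃ ⊆ (i + 1) • Ω₃`: the shift is absorbed by the
extra copy of `Ω₃` in the tighter Pontryagin difference. -/

open Matrix Pointwise

theorem add_mem_pontryaginDiff_add {n : ℕ} {A B C C' : Set (Fin n → ℝ)} {x d : Fin n → ℝ}
    (hx : x ∈ pontryaginDiff A (B + C')) (hC : ∀ c ∈ C, d + c ∈ C') :
    x + d ∈ pontryaginDiff A (B + C) := by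
  rintro _ ⟨b, hb, c, hc, rfl⟩
  convert hx (b + (d + c)) (Set.add_mem_add hb (hC c hc)) using 1
  simp only
  abel

theorem Convex.add_mem_one_add_smul {E : Type*} [AddCommGroup E] [Module ℝ E] {Ω : Set E}
    (hΩ : Convex ℝ Ω) {t : ℝ} (ht : 0 ≤ t) {d z : E} (hd : d ∈ Ω) (hz : z ∈ t • Ω) :
    d + z ∈ (1 + t) • Ω := by
  rw [hΩ.add_smul zero_le_one ht, one_smul]
  exact Set.add_mem_add hd hz

theorem parameter_update_tube_shift_general
    (n : ℕ) (S Ω₂ Ω₃ : Set (Fin n → ℝ))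
    (hconv : Convex ℝ Ω₃)
    (i : ℕ)
    (Ahat Ahat' : Matrix (Fin n) (Fin n) ℝ) (bhat bhat' : Fin n → ℝ)
    (s : Fin n → ℝ) (u : ℝ)
    (h1 : Ahat *ᵥ s + u • bhat ∈
      pontryaginDiff S (Ω₂ + ((i : ℝ) + 1) • Ω₃))
    (h2 : (Ahat' - Ahat) *ᵥ s + u • (bhat' - bhat) ∈ Ω₃) :
    Ahat' *ᵥ s + u • bhat' ∈ pontryaginDiff S (Ω₂ + (i : ℝ) • Ω₃) := by
  have hsplit : Ahat' *ᵥ s + u • bhat'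
      = (Ahat *ᵥ s + u • bhat) + ((Ahat' - Ahat) *ᵥ s + u • (bhat' - bhat)) := by
    rw [sub_mulVec, smul_sub]
    abel
  rw [hsplit]
  refine add_mem_pontryaginDiff_add h1 fun z hz => ?_
  rw [add_comm (i : ℝ)]
  exact hconv.add_mem_one_add_smul i.cast_nonneg h2 hz

/-- Parameter-update shift of the tube constraint
(middle-step inclusion in the proof of Theorem 1 of the paper). -/
theorem parameter_update_tube_shift
    (n : ℕ) (S Ω₂ Ω₃ : Set (Fin n → ℝ))
    (hne : Ω₃.Nonempty) (hconv : Convex ℝ Ω₃)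
    (i : ℕ)
    (Ahat Ahat' : Matrix (Fin n) (Fin n) ℝ) (bhat bhat' : Fin n → ℝ)
    (s : Fin n → ℝ) (u : ℝ)
    (h1 : Ahat *ᵥ s + u • bhat ∈
      pontryaginDiff S (Ω₂ + ((i : ℝ) + 1) • Ω₃))
    (h2 : (Ahat' - Ahat) *ᵥ s + u • (bhat' - bhat) ∈ Ω₃) :
    Ahat' *ᵥ s + u • bhat' ∈ pontryaginDiff S (Ω₂ + (i : ℝ) • Ω₃) :=
  parameter_update_tube_shift_general n S Ω₂ Ω₃ hconv i Ahat Ahat' bhat bhat' s u h1 h2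
end

section
/- Confinement of the error reachable sets (combination of equations (15) and (16) of the paper): Let F ∈ ℝ^{n×n} and W₀, Ω, Ω₁ ⊆ ℝ^n with F·W₀ ⊆ W₀, 0 ∈ Ω, and F·Ω + Ω₁ ⊆ Ω. Then for every i ≥ 0, F^i·W₀ + ∑_{k=0}^{i−1} F^k·Ω₁ ⊆ W₀ + Ω, where the empty Minkowski sum (i = 0) is {0}. -/
/-!
Only additivity of `v ↦ F v` matters. Invariance of `W₀` gives `Fⁱ W₀ ⊆ W₀`, and the partial sums
`∑_{k<i} Fᵏ Ω₁` stay in `Ω` by induction on `i`: splitting off the `k = 0` term,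
`∑_{k<i+1} Fᵏ Ω₁ = F (∑_{k<i} Fᵏ Ω₁) + Ω₁ ⊆ F Ω + Ω₁ ⊆ Ω`, starting from `{0} ⊆ Ω`.
-/

open Matrix Pointwise

section InvariantSets

variable {M G : Type*} [AddCommMonoid M] [FunLike G M M] [AddMonoidHomClass G M M]

theorem Set.finsetSum_range_image_iterate_subset (f : G) {Ω Ω₁ : Set M} (h0 : (0 : M) ∈ Ω)
    (hΩ : f '' Ω + Ω₁ ⊆ Ω) (i : ℕ) : ∑ k ∈ Finset.range i, (⇑f)^[k] '' Ω₁ ⊆ Ω := by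
  induction i with
  | zero => simpa using h0
  | succ i ih =>
    calc ∑ k ∈ Finset.range (i + 1), (⇑f)^[k] '' Ω₁
        = f '' ∑ k ∈ Finset.range i, (⇑f)^[k] '' Ω₁ + Ω₁ := by
          simp only [Finset.sum_range_succ', Set.image_finsetSum, Function.iterate_succ',
            Set.image_comp, Function.iterate_zero, Set.image_id]
      _ ⊆ f '' Ω + Ω₁ := Set.add_subset_add_right (Set.image_mono ih)
      _ ⊆ Ω := hΩ

theorem Set.image_iterate_add_finsetSum_subset (f : G) {W₀ Ω Ω₁ : Set M}
    (hW₀ : Set.MapsTo f W₀ W₀) (h0 : (0 : M) ∈ Ω) (hΩ : f '' Ω + Ω₁ ⊆ Ω) (i : ℕ) :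
    (⇑f)^[i] '' W₀ + ∑ k ∈ Finset.range i, (⇑f)^[k] '' Ω₁ ⊆ W₀ + Ω :=
  Set.add_subset_add (hW₀.iterate i).image_subset
    (Set.finsetSum_range_image_iterate_subset f h0 hΩ i)

end InvariantSets

theorem Matrix.mulVec_pow_eq_iterate {n R : Type*} [Fintype n] [DecidableEq n] [CommSemiring R]
    (F : Matrix n n R) (k : ℕ) : (fun v => (F ^ k) *ᵥ v) = (⇑(Matrix.toLin' F))^[k] := by
  rw [← Module.End.coe_pow, ← Matrix.toLin'_pow]
  rfl

/-- Confinement of the error reachable sets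
(combination of equations (15) and (16) of the paper). -/
theorem error_reachable_sets_confined
    (n : ℕ) (F : Matrix (Fin n) (Fin n) ℝ)
    (W₀ Ω Ω₁ : Set (Fin n → ℝ))
    (hW₀ : (fun v => F *ᵥ v) '' W₀ ⊆ W₀)
    (h0 : (0 : Fin n → ℝ) ∈ Ω)
    (hRPI : (fun v => F *ᵥ v) '' Ω + Ω₁ ⊆ Ω) :
    ∀ i : ℕ,
      (fun v => (F ^ i) *ᵥ v) '' W₀ +
        ∑ k ∈ Finset.range i, (fun v => (F ^ k) *ᵥ v) '' Ω₁ ⊆ W₀ + Ω := by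
  intro i
  simp only [Matrix.mulVec_pow_eq_iterate]
  exact Set.image_iterate_add_finsetSum_subset (Matrix.toLin' F)
    (Set.mapsTo_iff_image_subset.mpr hW₀) h0 hRPI i
end

section
/- Theorem 1 of the paper (one-step recursive feasibility of the homothetic-tube optimization 𝕆ℙ2): Let n ≥ 1, N ≥ 2, j ≥ 1. Fix d₁, …, d_j ∈ ℝ^n and let D := conv{d₁, …, d_j}. Let X̂ ⊆ ℝ^n, let U ⊆ ℝ be convex, let Ω₂, Ω₃ ⊆ ℝ^n with Ω₃ nonempty and convex, let ξ ≥ 0 and X̂_T := ξ•D with X̂_T ⊆ X̂, let λ ∈ (0,1), K ∈ ℝ^{1×n}, and let Ψ be a set of pair253 (Â, b̂) ∈ ℝ^{n×n} × ℝ^n. Assume: (i) for all (Â, b̂) ∈ Ψ and all x ∈ X̂_T: (Â + b̂K)x ∈ λ•X̂_T and Kx ∈ U; (ii) λ•X̂_T ⊆ X̂_T ⊖ (Ω₂ + (N−1)•Ω₃); (iii) for all (Â, b̂), (Â', b̂') ∈ Ψ and all x̂ ∈ X̂, u ∈ U: (Â' − Â)x̂ + (b̂' − b̂)u ∈ Ω₃.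 Let (Â_t, b̂_t), (Â_{t+1}, b̂_{t+1}) ∈ Ψ. Suppose a feasible tube exists at time t: centers β₀, …, β_N ∈ ℝ^n and scalars α₀, …, α_N with α₀ = 0, α_i ≥ 0, sections S_i := {β_i} + α_i•D satisfying S_i ⊆ X̂ for i = 0, …, N−1 and S_N ⊆ X̂_T, and vertex controls u_i^k ∈ U (i = 0,…,N−1, k = 1,…,j) with Â_t(β_i + α_i d_k) + b̂_t u_i^k ∈ S_{i+1} ⊖ (Ω₂ + i•Ω₃) for all such i, k. Let x̂₊ ∈ S₁. Then a feasible tube exists at time t+1: there exist centers β'₀, …, β'_N and scalars α'₀, …, α'_N with α'₀ = 0, β'₀ = x̂₊, α'_i ≥ 0, sections S'_i := {β'_i} + α'_i•D satisfying S'_i ⊆ X̂ for i = 0, …, N−1 and S'_N ⊆ X̂_T, and controls u'^k_i ∈ U with Â_{t+1}(β'_i + α'_i d_k) + b̂_{t+1} u'^k_i ∈ S'_{i+1} ⊖ (Ω₂ + i•Ω₃) for all i = 0, …, N−1 and k = 1, …, j. -/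
/-!
The tube at time `t + 1` is the tube at time `t` shifted by one step: it starts at `x̂₊`, reuses
the sections `S₂, …, S_N` and ends with the terminal set `ξ • D = {0} + ξ • D`, reached with the
terminal controls `K x`, which is admissible by λ-contractivity and (29). Since `x̂₊ ∈ S₁` is a convex
combination of the vertices of `S₁`, the same combination of their controls is a first control.
Replacing `(Â_t, b̂_t)` by `(Â_{t+1}, b̂_{t+1})` moves every predicted point by an element `δ` of
`Ω₃`, and the margin `Ω₂ + (i + 1) • Ω₃` of the old tube at step `i + 1` absorbs it, leaving the
margin `Ω₂ + i • Ω₃` needed at step `i`: for convex `Ω₃`, `δ + i • Ω₃ ⊆ (i + 1) • Ω₃`.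
-/

open Matrix Pointwise

section ConvexHull

variable {E F G : Type*} [AddCommGroup E] [Module ℝ E] [AddCommGroup F] [Module ℝ F]
  [AddCommGroup G] [Module ℝ G]

theorem singleton_add_smul_convexHull_range {ι : Type*} (β : E) (α : ℝ) (d : ι → E) :
    {β} + α • convexHull ℝ (Set.range d) = convexHull ℝ (Set.range fun k => β + α • d k) := by
  rw [← convexHull_smul, ← convexHull_singleton (𝕜 := ℝ) β, ← convexHull_add,
    Set.smul_set_range, Set.singleton_add, ← Set.range_comp]
  rfl

theorem exists_mem_add_mem_of_mem_convexHull {ι : Type*} {x : ι → E} {u : ι → F}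
    {U : Set F} {C : Set G} (f : E →ₗ[ℝ] G) (g : F →ₗ[ℝ] G) (hU : Convex ℝ U) (hC : Convex ℝ C)
    (hu : ∀ k, u k ∈ U) (hfg : ∀ k, f (x k) + g (u k) ∈ C) {y : E}
    (hy : y ∈ convexHull ℝ (Set.range x)) : ∃ v ∈ U, f y + g v ∈ C := by
  have hsub : convexHull ℝ (Set.range fun k => (x k, u k)) ⊆
      LinearMap.snd ℝ E F ⁻¹' U ∩ f.coprod g ⁻¹' C :=
    convexHull_min (Set.range_subset_iff.2 fun k => ⟨hu k, hfg k⟩)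
      ((hU.linear_preimage _).inter (hC.linear_preimage _))
  have hrange : Set.range x = LinearMap.fst ℝ E F '' Set.range fun k => (x k, u k) := by
    rw [← Set.range_comp]; rfl
  rw [hrange, ← LinearMap.image_convexHull] at hy
  obtain ⟨⟨y', v⟩, hp, rfl⟩ := hy
  exact ⟨v, (hsub hp).1, (hsub hp).2⟩

end ConvexHull

section FinVectors

variable {n : ℕ}

theorem convex_pontryaginDiff {A : Set (Fin n → ℝ)} (hA : Convex ℝ A) (B : Set (Fin n → ℝ)) :
    Convex ℝ (pontryaginDiff A B) := by
  have hinter : pontryaginDiff A B = ⋂ b ∈ B, (· + b) ⁻¹' A := by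
    ext x; simp [pontryaginDiff]
  rw [hinter]
  exact convex_iInter₂ fun b _ => hA.translate_preimage_left b

theorem add_mem_pontryaginDiff_add_smul {A Ω₂ Ω₃ : Set (Fin n → ℝ)} (hΩ₃ : Convex ℝ Ω₃)
    {c : ℝ} (hc : 0 ≤ c) {y δ : Fin n → ℝ} (hy : y ∈ pontryaginDiff A (Ω₂ + (c + 1) • Ω₃))
    (hδ : δ ∈ Ω₃) : y + δ ∈ pontryaginDiff A (Ω₂ + c • Ω₃) := by
  rintro _ ⟨ω, hω, v, hv, rfl⟩
  have hδv : δ + v ∈ (c + 1) • Ω₃ := by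
    rw [add_comm c, hΩ₃.add_smul zero_le_one hc, one_smul]
    exact Set.add_mem_add hδ hv
  have hsum : y + δ + (ω + v) = y + (ω + (δ + v)) := by abel
  exact hsum ▸ hy _ (Set.add_mem_add hω hδv)

theorem mulVec_add_smul_mem_pontryaginDiff_of_drift {S Ω₂ Ω₃ : Set (Fin n → ℝ)}
    (hΩ₃ : Convex ℝ Ω₃) {A A' : Matrix (Fin n) (Fin n) ℝ} {b b' x : Fin n → ℝ} {u : ℝ} (i : ℕ)
    (h : A *ᵥ x + u • b ∈ pontryaginDiff S (Ω₂ + ((i + 1 : ℕ) : ℝ) • Ω₃))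
    (hδ : (A' - A) *ᵥ x + u • (b' - b) ∈ Ω₃) :
    A' *ᵥ x + u • b' ∈ pontryaginDiff S (Ω₂ + (i : ℝ) • Ω₃) := by
  have hsplit : A' *ᵥ x + u • b' = A *ᵥ x + u • b + ((A' - A) *ᵥ x + u • (b' - b)) := by
    rw [sub_mulVec, smul_sub]; abel
  rw [hsplit]
  exact add_mem_pontryaginDiff_add_smul hΩ₃ i.cast_nonneg (by rwa [← Nat.cast_succ]) hδ

theorem exists_mulVec_add_smul_mem_of_mem_singleton_add_smul_convexHull {j : ℕ}
    {d : Fin j → Fin n → ℝ} {U : Set ℝ} {C : Set (Fin n → ℝ)} (hU : Convex ℝ U)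
    (hC : Convex ℝ C) (A : Matrix (Fin n) (Fin n) ℝ) (b β : Fin n → ℝ) (α : ℝ) {u : Fin j → ℝ}
    (hu : ∀ k, u k ∈ U) (hAu : ∀ k, A *ᵥ (β + α • d k) + u k • b ∈ C) {x : Fin n → ℝ}
    (hx : x ∈ {β} + α • convexHull ℝ (Set.range d)) : ∃ v ∈ U, A *ᵥ x + v • b ∈ C :=
  exists_mem_add_mem_of_mem_convexHull A.mulVecLin (LinearMap.toSpanSingleton ℝ _ b) hU hC hu hAu
    (by rwa [← singleton_add_smul_convexHull_range])

theorem add_vecMulVec_mulVec (A : Matrix (Fin n) (Fin n) ℝ) (b K x : Fin n → ℝ) :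
    (A + vecMulVec b K) *ᵥ x = A *ᵥ x + (K ⬝ᵥ x) • b := by
  rw [add_mulVec, vecMulVec_mulVec, op_smul_eq_smul]

end FinVectors

theorem homothetic_tube_recursive_feasibility_general
    (n N j : ℕ) (hN : 2 ≤ N)
    (d : Fin j → (Fin n → ℝ))
    (D : Set (Fin n → ℝ)) (hD : D = convexHull ℝ (Set.range d))
    (Xhat : Set (Fin n → ℝ)) (U : Set ℝ) (hU : Convex ℝ U)
    (Ω₂ Ω₃ : Set (Fin n → ℝ)) (hΩ₃conv : Convex ℝ Ω₃)
    (ξ : ℝ) (hξ : 0 ≤ ξ)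
    (XT : Set (Fin n → ℝ)) (hXT : XT = ξ • D) (hXTX : XT ⊆ Xhat)
    (lam : ℝ)
    (K : Fin n → ℝ)
    (Ψ : Set (Matrix (Fin n) (Fin n) ℝ × (Fin n → ℝ)))
    -- (i) λ-contractive terminal set with admissible terminal controller
    (hterm : ∀ p ∈ Ψ, ∀ x ∈ XT,
      (p.1 + vecMulVec p.2 K) *ᵥ x ∈ lam • XT ∧ K ⬝ᵥ x ∈ U)
    -- (ii) inequality (29)
    (hcontract : lam • XT ⊆
      pontryaginDiff XT (Ω₂ + ((N - 1 : ℕ) : ℝ) • Ω₃))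
    -- (iii) one-step parameter drift lies in Ω₃
    (hdrift : ∀ p ∈ Ψ, ∀ q ∈ Ψ, ∀ xhat ∈ Xhat, ∀ u ∈ U,
      (q.1 - p.1) *ᵥ xhat + u • (q.2 - p.2) ∈ Ω₃)
    -- consecutive parameter estimates
    (At At1 : Matrix (Fin n) (Fin n) ℝ) (bt bt1 : Fin n → ℝ)
    (hAt : (At, bt) ∈ Ψ) (hAt1 : (At1, bt1) ∈ Ψ)
    -- a feasible tube at time t
    (β : ℕ → (Fin n → ℝ)) (α : ℕ → ℝ) (uc : ℕ → Fin j → ℝ)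
    (hαpos : ∀ i ≤ N, 0 ≤ α i)
    (hSX : ∀ i < N, {β i} + α i • D ⊆ Xhat)
    (hSN : {β N} + α N • D ⊆ XT)
    (hucU : ∀ i < N, ∀ k : Fin j, uc i k ∈ U)
    (hcons : ∀ i < N, ∀ k : Fin j,
      At *ᵥ (β i + α i • d k) + uc i k • bt ∈
        pontryaginDiff ({β (i + 1)} + α (i + 1) • D) (Ω₂ + (i : ℝ) • Ω₃))
    -- current state estimate lies in the first tube section
    (xplus : Fin n → ℝ) (hxplus : xplus ∈ {β 1} + α 1 • D) :
    -- a feasible tube exists at time t+1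
    ∃ (β' : ℕ → (Fin n → ℝ)) (α' : ℕ → ℝ) (uc' : ℕ → Fin j → ℝ),
      α' 0 = 0 ∧ β' 0 = xplus ∧ (∀ i ≤ N, 0 ≤ α' i) ∧
      (∀ i < N, {β' i} + α' i • D ⊆ Xhat) ∧
      ({β' N} + α' N • D ⊆ XT) ∧
      (∀ i < N, ∀ k : Fin j,
        uc' i k ∈ U ∧
        At1 *ᵥ (β' i + α' i • d k) + uc' i k • bt1 ∈
          pontryaginDiff ({β' (i + 1)} + α' (i + 1) • D) (Ω₂ + (i : ℝ) • Ω₃)) := by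
  have hDconv : Convex ℝ D := hD ▸ convex_convexHull ℝ _
  have hvertex : ∀ i k, β i + α i • d k ∈ {β i} + α i • D := fun i k =>
    Set.add_mem_add rfl (Set.smul_mem_smul_set (hD ▸ subset_convexHull ℝ _ ⟨k, rfl⟩))
  have hXT0 : XT = {0} + ξ • D := by rw [hXT, Set.singleton_zero, zero_add]
  obtain ⟨u₀, hu₀U, hu₀⟩ : ∃ u ∈ U,
      At *ᵥ xplus + u • bt ∈ pontryaginDiff ({β 2} + α 2 • D) (Ω₂ + ((0 + 1 : ℕ) : ℝ) • Ω₃) :=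
    exists_mulVec_add_smul_mem_of_mem_singleton_add_smul_convexHull hU
      (convex_pontryaginDiff ((convex_singleton _).add (hDconv.smul _)) _) At bt (β 1) (α 1)
      (hucU 1 (by omega)) (hcons 1 (by omega)) (hD ▸ hxplus)
  have hshift : ∀ (i : ℕ) (S : Set (Fin n → ℝ)), ∀ x ∈ Xhat, ∀ u ∈ U,
      At *ᵥ x + u • bt ∈ pontryaginDiff S (Ω₂ + ((i + 1 : ℕ) : ℝ) • Ω₃) →
        At1 *ᵥ x + u • bt1 ∈ pontryaginDiff S (Ω₂ + (i : ℝ) • Ω₃) := fun i S x hx u hu h =>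
    mulVec_add_smul_mem_pontryaginDiff_of_drift hΩ₃conv i h (hdrift _ hAt _ hAt1 x hx u hu)
  refine ⟨fun i => if i = 0 then xplus else if i = N then 0 else β (i + 1),
    fun i => if i = 0 then 0 else if i = N then ξ else α (i + 1),
    fun i k => if i = 0 then u₀ else if i + 1 = N then K ⬝ᵥ (β N + α N • d k) else uc (i + 1) k,
    rfl, rfl, ?_, ?_, ?_, ?_⟩
  · intro i hi
    dsimp only
    split_ifs
    exacts [le_rfl, hξ, hαpos _ (by omega)]
  · intro i hi
    dsimp only
    split_ifs with h0 hN'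
    · refine (Set.add_subset_add_left (Set.zero_smul_set_subset D)).trans ?_
      rw [add_zero]
      exact Set.singleton_subset_iff.2 (hSX 1 (by omega) hxplus)
    · omega
    · obtain hlt | rfl := Nat.succ_le_of_lt hi |>.lt_or_eq
      exacts [hSX _ hlt, hSN.trans hXTX]
  · simp only [show N ≠ 0 by omega, ↓reduceIte, ← hXT0, subset_rfl]
  · intro i hi k
    dsimp only
    obtain rfl | hi0 := Nat.eq_zero_or_pos i
    · simp only [↓reduceIte, zero_smul, add_zero, show 1 ≠ N by omega]
      exact ⟨hu₀U, hshift 0 _ _ (hSX 1 (by omega) hxplus) _ hu₀U hu₀⟩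
    obtain hlt | rfl := Nat.succ_le_of_lt hi |>.lt_or_eq
    · simp only [hi0.ne', hlt.ne, (show i ≠ N by omega), Nat.succ_ne_zero i, ↓reduceIte]
      exact ⟨hucU _ hlt k,
        hshift i _ _ (hSX _ hlt (hvertex _ k)) _ (hucU _ hlt k) (hcons _ hlt k)⟩
    · obtain ⟨hcontracted, hKU⟩ := hterm _ hAt1 _ (hSN (hvertex _ k))
      simp only [hi0.ne', (Nat.lt_succ_self i).ne, Nat.succ_ne_zero i, ↓reduceIte, ← hXT0]
      refine ⟨hKU, ?_⟩
      rw [← add_vecMulVec_mulVec]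
      simpa using hcontract hcontracted

/-- Theorem 1 of the paper: one-step recursive feasibility of the
homothetic-tube optimization 𝕆ℙ2. -/
theorem homothetic_tube_recursive_feasibility
    (n N j : ℕ) (hn : 1 ≤ n) (hN : 2 ≤ N) (hj : 1 ≤ j)
    (d : Fin j → (Fin n → ℝ))
    (D : Set (Fin n → ℝ)) (hD : D = convexHull ℝ (Set.range d))
    (Xhat : Set (Fin n → ℝ)) (U : Set ℝ) (hU : Convex ℝ U)
    (Ω₂ Ω₃ : Set (Fin n → ℝ)) (hΩ₃ne : Ω₃.Nonempty) (hΩ₃conv : Convex ℝ Ω₃)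
    (ξ : ℝ) (hξ : 0 ≤ ξ)
    (XT : Set (Fin n → ℝ)) (hXT : XT = ξ • D) (hXTX : XT ⊆ Xhat)
    (lam : ℝ) (hlam : lam ∈ Set.Ioo (0 : ℝ) 1)
    (K : Fin n → ℝ)
    (Ψ : Set (Matrix (Fin n) (Fin n) ℝ × (Fin n → ℝ)))
    -- (i) λ-contractive terminal set with admissible terminal controller
    (hterm : ∀ p ∈ Ψ, ∀ x ∈ XT,
      (p.1 + vecMulVec p.2 K) *ᵥ x ∈ lam • XT ∧ K ⬝ᵥ x ∈ U)
    -- (ii) inequality (29)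
    (hcontract : lam • XT ⊆
      pontryaginDiff XT (Ω₂ + ((N - 1 : ℕ) : ℝ) • Ω₃))
    -- (iii) one-step parameter drift lies in Ω₃
    (hdrift : ∀ p ∈ Ψ, ∀ q ∈ Ψ, ∀ xhat ∈ Xhat, ∀ u ∈ U,
      (q.1 - p.1) *ᵥ xhat + u • (q.2 - p.2) ∈ Ω₃)
    -- consecutive parameter estimates
    (At At1 : Matrix (Fin n) (Fin n) ℝ) (bt bt1 : Fin n → ℝ)
    (hAt : (At, bt) ∈ Ψ) (hAt1 : (At1, bt1) ∈ Ψ)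
    -- a feasible tube at time t
    (β : ℕ → (Fin n → ℝ)) (α : ℕ → ℝ) (uc : ℕ → Fin j → ℝ)
    (hα0 : α 0 = 0) (hαpos : ∀ i ≤ N, 0 ≤ α i)
    (hSX : ∀ i < N, {β i} + α i • D ⊆ Xhat)
    (hSN : {β N} + α N • D ⊆ XT)
    (hucU : ∀ i < N, ∀ k : Fin j, uc i k ∈ U)
    (hcons : ∀ i < N, ∀ k : Fin j,
      At *ᵥ (β i + α i • d k) + uc i k • bt ∈
        pontryaginDiff ({β (i + 1)} + α (i + 1) • D) (Ω₂ + (i : ℝ) • Ω₃))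
    -- current state estimate lies in the first tube section
    (xplus : Fin n → ℝ) (hxplus : xplus ∈ {β 1} + α 1 • D) :
    -- a feasible tube exists at time t+1
    ∃ (β' : ℕ → (Fin n → ℝ)) (α' : ℕ → ℝ) (uc' : ℕ → Fin j → ℝ),
      α' 0 = 0 ∧ β' 0 = xplus ∧ (∀ i ≤ N, 0 ≤ α' i) ∧
      (∀ i < N, {β' i} + α' i • D ⊆ Xhat) ∧
      ({β' N} + α' N • D ⊆ XT) ∧
      (∀ i < N, ∀ k : Fin j,
        uc' i k ∈ U ∧
        At1 *ᵥ (β' i + α' i • d k) + uc' i k • bt1 ∈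
          pontryaginDiff ({β' (i + 1)} + α' (i + 1) • D) (Ω₂ + (i : ℝ) • Ω₃)) :=
  homothetic_tube_recursive_feasibility_general n N j hN d D hD Xhat U hU Ω₂ Ω₃ hΩ₃conv ξ hξ XT hXT
    hXTX lam K Ψ hterm hcontract hdrift At At1 bt bt1 hAt hAt1 β α uc hαpos hSX hSN hucU hcons xplus
    hxplus
end
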